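/- arXiv:2208.00621 — 7 statements merged into one kernel-verified Lean document; each statement's English description precedes it below -/
import Mathlib

section
/- If G is an R̄-group (i.e., G is torsion-free and for every x ∈ G the normalizer and centralizer of the isolator subset I⟨x⟩ = {g ∈ G | g^n ∈ ⟨x⟩ for some positive integer n} coincide), then G is an R-group, i.e., for all x, y ∈ G and nonzero integers n, x^n = y^n implies x = y. -/
/-- The isolator subset `I⟨x⟩` of the cyclic subgroup generated by `x`. -/
def isolator {G : Type*} [Group G] (x : G) : Set G :=
  {g | ∃ n : ℕ, 0 < n ∧ g ^ n ∈ Subgroup.zpowers x}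

/-- The normalizer of a subset `S` of `G`. -/
def setNormalizer {G : Type*} [Group G] (S : Set G) : Set G :=
  {g | ∀ h, h ∈ S ↔ g⁻¹ * h * g ∈ S}

/-- The centralizer of a subset `S` of `G`. -/
def setCentralizer {G : Type*} [Group G] (S : Set G) : Set G :=
  {g | ∀ h ∈ S, g * h = h * g}

private lemma conj_pow_aux {G : Type*} [Group G] (s h : G) (n : ℕ) :
    (s⁻¹ * h * s) ^ n = s⁻¹ * h ^ n * s := by
  induction n with
  | zero => simp
  | succ n ih => rw [pow_succ, pow_succ, ih]; group

theorem Rbar_implies_R {G : Type*} [Group G]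
    (htf : ∀ g : G, ∀ n : ℕ, 0 < n → g ^ n = 1 → g = 1)
    (hRbar : ∀ x : G, setNormalizer (isolator x) = setCentralizer (isolator x)) :
    ∀ x y : G, ∀ n : ℤ, n ≠ 0 → x ^ n = y ^ n → x = y := by
  intro x y n hn h
  -- reduce to a positive natural exponent
  set m : ℕ := n.natAbs with hmdef
  have hm0 : 0 < m := Int.natAbs_pos.mpr hn
  have hxy : x ^ m = y ^ m := by
    rcases Int.natAbs_eq n with he | he
    · rw [← zpow_natCast, ← zpow_natCast, ← he, h]
    · have h' : x ^ (-n) = y ^ (-n) := by rw [zpow_neg, zpow_neg, h]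
      rw [← zpow_natCast, ← zpow_natCast]
      have : (m : ℤ) = -n := by omega
      rw [this, h']
  -- x ^ (m * k) commutes with y for every integer k
  have hA : ∀ k : ℤ, Commute y (x ^ ((m : ℤ) * k)) := by
    intro k
    have : x ^ ((m : ℤ) * k) = y ^ ((m : ℤ) * k) := by
      rw [zpow_mul, zpow_mul, zpow_natCast, zpow_natCast, hxy]
    rw [this]
    exact Commute.zpow_right (Commute.refl y) _
  -- conjugation by anything commuting with y preserves the isolator of x
  have hstep : ∀ h' ∈ isolator x, ∀ s : G, Commute y s → s⁻¹ * h' * s ∈ isolator x := by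
    intro h' hh' s hs
    obtain ⟨p, hp, k, hk⟩ := hh'
    refine ⟨p * m, Nat.mul_pos hp hm0, ?_⟩
    have hpow : (s⁻¹ * h' * s) ^ (p * m) = s⁻¹ * x ^ ((m : ℤ) * k) * s := by
      rw [conj_pow_aux, pow_mul, ← hk, ← zpow_natCast (x ^ k), ← zpow_mul, mul_comm k (m : ℤ)]
    have hcs : s⁻¹ * x ^ ((m : ℤ) * k) * s = x ^ ((m : ℤ) * k) := by
      have := (hA k).symm  -- Commute (x ^ _) y
      have hcomm : x ^ ((m : ℤ) * k) * s = s * x ^ ((m : ℤ) * k) := by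
        have : x ^ ((m : ℤ) * k) = y ^ ((m : ℤ) * k) := by
          rw [zpow_mul, zpow_mul, zpow_natCast, zpow_natCast, hxy]
        rw [this]
        exact ((Commute.zpow_left hs _)).eq
      rw [mul_assoc, hcomm, ← mul_assoc, inv_mul_cancel, one_mul]
    rw [hpow, hcs]
    exact ⟨(m : ℤ) * k, rfl⟩
  -- y normalizes the isolator of x
  have hynorm : y ∈ setNormalizer (isolator x) := by
    intro h'
    constructor
    · intro hh'
      exact hstep h' hh' y (Commute.refl y)
    · intro hh'
      have := hstep _ hh' y⁻¹ (Commute.inv_right (Commute.refl y))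
      simpa [mul_assoc] using this
  rw [hRbar x] at hynorm
  have hxmem : x ∈ isolator x := ⟨1, one_pos, by simp [Subgroup.mem_zpowers]⟩
  have hcomm : y * x = x * y := hynorm x hxmem
  -- conclude using torsion-freeness
  have hC : Commute x y⁻¹ := (Commute.inv_right (by exact hcomm.symm : Commute x y))
  have : (x * y⁻¹) ^ m = 1 := by
    rw [hC.mul_pow, hxy, inv_pow, mul_inv_cancel]
  have := htf _ m hm0 this
  have : x = y := by
    have h1 : x * y⁻¹ = 1 := this
    calc x = x * y⁻¹ * y := by group
      _ = y := by rw [h1, one_mul]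
  exact this
end

section
/- If G is a torsion-free group with no generalized torsion elements (an R*-group), then G is an R-group: x^n = y^n for some nonzero integer n implies x = y. -/
/-- `g` is a generalized torsion element: `g ≠ 1` and some nonempty finite
product of conjugates of `g` equals the identity. -/
def IsGenTorsion {G : Type*} [Group G] (g : G) : Prop :=
  g ≠ 1 ∧ ∃ l : List G, l ≠ [] ∧ (l.map fun a => a⁻¹ * g * a).prod = 1

theorem Rstar_implies_R {G : Type*} [Group G]
    (htf : ∀ g : G, ∀ n : ℕ, 0 < n → g ^ n = 1 → g = 1)
    (hRstar : ∀ g : G, ¬ IsGenTorsion g) :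
    ∀ x y : G, ∀ n : ℤ, n ≠ 0 → x ^ n = y ^ n → x = y := by
  intro x y n hn h
  -- reduce to a positive natural exponent
  set m : ℕ := n.natAbs with hm
  have hmpos : 0 < m := Int.natAbs_pos.mpr hn
  have hxy : x ^ m = y ^ m := by
    have hz : x ^ (m : ℤ) = y ^ (m : ℤ) := by
      rcases Int.natAbs_eq n with he | he
      · rw [he] at h; exact h
      · have h' : (x ^ n)⁻¹ = (y ^ n)⁻¹ := by rw [h]
        rw [← zpow_neg, ← zpow_neg, he, neg_neg] at h'
        exact h'
    simpa [zpow_natCast] using hz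
  -- key computation
  have key : ∀ k : ℕ,
      ((List.range k).map (fun i => (y ^ i) * (x * y⁻¹) * (y ^ i)⁻¹)).prod
        = x ^ k * (y ^ k)⁻¹ := by
    intro k
    induction k with
    | zero => simp
    | succ k ih =>
        rw [List.range_succ, List.map_append, List.prod_append, ih]
        simp [pow_succ, mul_assoc]
  by_contra hne
  have hg : x * y⁻¹ ≠ 1 := by
    intro hg1
    exact hne (by rw [← mul_inv_eq_one]; exact hg1)
  apply hRstar (x * y⁻¹)
  refine ⟨hg, (List.range m).map (fun i => (y ^ i)⁻¹), ?_, ?_⟩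
  · simp [List.range_eq_nil, Nat.pos_iff_ne_zero.mp hmpos]
  · have : ((List.range m).map (fun i => (y ^ i)⁻¹)).map
        (fun a => a⁻¹ * (x * y⁻¹) * a)
        = (List.range m).map (fun i => (y ^ i) * (x * y⁻¹) * (y ^ i)⁻¹) := by
      simp [List.map_map, Function.comp]
    rw [this, key, hxy, mul_inv_cancel]
end

section
/- Let G be a group and x, y ∈ G with x^n = y^n for some nonzero n. If the commutator [x,y] ≠ 1, then [x,y] is a generalized torsion element of G. -/
/-- The commutator `[x,y] = x⁻¹y⁻¹xy`. -/
def gcomm {G : Type*} [Group G] (x y : G) : G := x⁻¹ * y⁻¹ * x * y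

private lemma conj_prod_aux {G : Type*} [Group G] (g c : G) (l : List G) :
    (l.map fun a => (a * c)⁻¹ * g * (a * c)).prod
      = c⁻¹ * (l.map fun a => a⁻¹ * g * a).prod * c := by
  induction l with
  | nil => simp
  | cons b t ih =>
      simp only [List.map_cons, List.prod_cons, ih]
      group

private lemma gcomm_pow_aux {G : Type*} [Group G] (x y : G) :
    ∀ m : ℕ, ∃ l : List G, l.length = m ∧
      (l.map fun a => a⁻¹ * gcomm x y * a).prod = gcomm x (y ^ m) := by
  intro m
  induction m with
  | zero => exact ⟨[], rfl, by simp [gcomm]⟩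
  | succ m ih =>
      obtain ⟨l, hl, hp⟩ := ih
      refine ⟨1 :: l.map (· * y), by simp [hl], ?_⟩
      have : ((l.map (· * y)).map fun a => a⁻¹ * gcomm x y * a).prod
          = y⁻¹ * (l.map fun a => a⁻¹ * gcomm x y * a).prod * y := by
        rw [List.map_map]
        exact conj_prod_aux _ _ _
      simp only [List.map_cons, List.prod_cons, this, hp]
      simp only [gcomm, pow_succ]
      group

theorem commutator_genTorsion_of_eq_pow {G : Type*} [Group G] (x y : G) (n : ℤ)
    (hn : n ≠ 0) (h : x ^ n = y ^ n) (hc : gcomm x y ≠ 1) :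
    IsGenTorsion (gcomm x y) := by
  refine ⟨hc, ?_⟩
  -- get a positive natural number m with x^m = y^m
  obtain ⟨m, hm, hxy⟩ : ∃ m : ℕ, m ≠ 0 ∧ x ^ m = y ^ m := by
    rcases lt_or_gt_of_ne hn with hneg | hpos
    · refine ⟨(-n).toNat, by omega, ?_⟩
      have hx : (x ^ ((-n).toNat) : G) = x ^ (-n) := by
        rw [← zpow_natCast, Int.toNat_of_nonneg (by omega)]
      have hy : (y ^ ((-n).toNat) : G) = y ^ (-n) := by
        rw [← zpow_natCast, Int.toNat_of_nonneg (by omega)]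
      rw [hx, hy, zpow_neg, zpow_neg, h]
    · refine ⟨n.toNat, by omega, ?_⟩
      have hx : (x ^ (n.toNat) : G) = x ^ n := by
        rw [← zpow_natCast, Int.toNat_of_nonneg (by omega)]
      have hy : (y ^ (n.toNat) : G) = y ^ n := by
        rw [← zpow_natCast, Int.toNat_of_nonneg (by omega)]
      rw [hx, hy, h]
  obtain ⟨l, hl, hp⟩ := gcomm_pow_aux x y m
  refine ⟨l, ?_, ?_⟩
  · intro hnil; rw [hnil] at hl; simp at hl; omega
  · rw [hp, gcomm, ← hxy]
    group
end

section
/- Let G = ⟨a, b | a^p = b^q⟩ be the group of the (p,q)-torus knot with p, q ≥ 2. Then the element x = (ba)⁻¹ a (ba) satisfies x^p = a^p but x ≠ a; hence G is not an R-group. -/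
/-- The relator `a^p * b^{-q}` of the torus knot group `⟨a, b | a^p = b^q⟩`. -/
def torusRels (p q : ℕ) : Set (FreeGroup (Fin 2)) :=
  {FreeGroup.of 0 ^ p * (FreeGroup.of 1 ^ q)⁻¹}

/-- A permutation of `ZMod p × ZMod q` acting as a `p`-cycle on the slice where the
second coordinate is `0`. -/
def sigmaPerm (p q : ℕ) : Equiv.Perm (ZMod p × ZMod q) where
  toFun x := if x.2 = 0 then (x.1 + 1, x.2) else x
  invFun x := if x.2 = 0 then (x.1 - 1, x.2) else x
  left_inv x := by obtain ⟨x1, x2⟩ := x; by_cases h : x2 = 0 <;> simp [h]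
  right_inv x := by obtain ⟨x1, x2⟩ := x; by_cases h : x2 = 0 <;> simp [h]

/-- A permutation of `ZMod p × ZMod q` acting as a `q`-cycle on the slice where the
first coordinate is `0`. -/
def tauPerm (p q : ℕ) : Equiv.Perm (ZMod p × ZMod q) where
  toFun x := if x.1 = 0 then (x.1, x.2 + 1) else x
  invFun x := if x.1 = 0 then (x.1, x.2 - 1) else x
  left_inv x := by obtain ⟨x1, x2⟩ := x; by_cases h : x1 = 0 <;> simp [h]
  right_inv x := by obtain ⟨x1, x2⟩ := x; by_cases h : x1 = 0 <;> simp [h]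

lemma sigmaPerm_apply (p q : ℕ) (x : ZMod p × ZMod q) :
    sigmaPerm p q x = if x.2 = 0 then (x.1 + 1, x.2) else x := rfl

lemma tauPerm_apply (p q : ℕ) (x : ZMod p × ZMod q) :
    tauPerm p q x = if x.1 = 0 then (x.1, x.2 + 1) else x := rfl

lemma sigmaPerm_pow (p q : ℕ) (n : ℕ) (x : ZMod p × ZMod q) :
    (sigmaPerm p q ^ n) x = if x.2 = 0 then (x.1 + n, x.2) else x := by
  induction n with
  | zero => by_cases h : x.2 = 0 <;> simp [h, Prod.ext_iff]
  | succ n ih =>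
    rw [pow_succ', Equiv.Perm.mul_apply, ih]
    by_cases h : x.2 = 0 <;>
      simp [h, sigmaPerm_apply, Prod.ext_iff] <;> push_cast <;> ring

lemma tauPerm_pow (p q : ℕ) (n : ℕ) (x : ZMod p × ZMod q) :
    (tauPerm p q ^ n) x = if x.1 = 0 then (x.1, x.2 + n) else x := by
  induction n with
  | zero => by_cases h : x.1 = 0 <;> simp [h, Prod.ext_iff]
  | succ n ih =>
    rw [pow_succ', Equiv.Perm.mul_apply, ih]
    by_cases h : x.1 = 0 <;>
      simp [h, tauPerm_apply, Prod.ext_iff] <;> push_cast <;> ring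

lemma sigmaPerm_pow_self (p q : ℕ) : sigmaPerm p q ^ p = 1 := by
  apply Equiv.ext
  intro x
  rw [sigmaPerm_pow]
  by_cases h : x.2 = 0 <;> simp [h, ZMod.natCast_self, Prod.ext_iff]

lemma tauPerm_pow_self (p q : ℕ) : tauPerm p q ^ q = 1 := by
  apply Equiv.ext
  intro x
  rw [tauPerm_pow]
  by_cases h : x.1 = 0 <;> simp [h, ZMod.natCast_self, Prod.ext_iff]

theorem torus_knot_group_not_R_group (p q : ℕ) (hp : 2 ≤ p) (hq : 2 ≤ q)
    (hpq : Nat.Coprime p q) :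
    letI G := PresentedGroup (torusRels p q)
    letI a : G := PresentedGroup.of 0
    letI b : G := PresentedGroup.of 1
    letI x : G := (b * a)⁻¹ * a * (b * a)
    x ^ p = a ^ p ∧ x ≠ a ∧
      ¬ (∀ u v : G, ∀ n : ℤ, n ≠ 0 → u ^ n = v ^ n → u = v) := by
  set G := PresentedGroup (torusRels p q)
  set a : G := PresentedGroup.of 0 with ha
  set b : G := PresentedGroup.of 1 with hb
  set x : G := (b * a)⁻¹ * a * (b * a) with hx
  -- the relation a^p = b^q
  have hrel : a ^ p = b ^ q := by
    have h1 : PresentedGroup.mk (torusRels p q)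
        (FreeGroup.of 0 ^ p * (FreeGroup.of 1 ^ q)⁻¹) = 1 := by
      apply (QuotientGroup.eq_one_iff _).mpr
      exact Subgroup.subset_normalClosure rfl
    rw [map_mul, map_pow, map_inv, map_pow] at h1
    have : (a : G) ^ p * (b ^ q)⁻¹ = 1 := h1
    rw [mul_inv_eq_one] at this
    exact this
  -- a^p commutes with b*a
  have hcomm : a ^ p * (b * a) = (b * a) * a ^ p := by
    have h1 : b ^ q * b = b * b ^ q := by rw [← pow_succ, ← pow_succ']
    have h2 : a ^ p * a = a * a ^ p := by rw [← pow_succ, ← pow_succ']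
    calc a ^ p * (b * a) = b ^ q * b * a := by rw [hrel, mul_assoc]
      _ = b * (b ^ q * a) := by rw [h1, mul_assoc]
      _ = b * (a ^ p * a) := by rw [hrel]
      _ = b * (a * a ^ p) := by rw [h2]
      _ = (b * a) * a ^ p := by rw [← mul_assoc]
  have part1 : x ^ p = a ^ p := by
    have : x ^ p = (b * a)⁻¹ * a ^ p * (b * a) := by
      rw [hx]
      have := conj_pow (i := p) (a := (b * a)⁻¹) (b := a)
      rw [inv_inv] at this
      exact this
    rw [this, mul_assoc, hcomm, ← mul_assoc, inv_mul_cancel, one_mul]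
  -- a homomorphism to permutations
  haveI : Fact (1 < p) := ⟨hp⟩
  haveI : Fact (1 < q) := ⟨hq⟩
  set f : Fin 2 → Equiv.Perm (ZMod p × ZMod q) :=
    fun i => if i = 0 then sigmaPerm p q else tauPerm p q with hf
  have hrels : ∀ r ∈ torusRels p q, FreeGroup.lift f r = 1 := by
    intro r hr
    rw [Set.mem_singleton_iff.mp hr]
    rw [map_mul, map_pow, map_inv, map_pow, FreeGroup.lift_apply_of, FreeGroup.lift_apply_of]
    simp only [hf]
    norm_num
    rw [sigmaPerm_pow_self, tauPerm_pow_self]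
    simp
  set φ : G →* Equiv.Perm (ZMod p × ZMod q) := PresentedGroup.toGroup hrels with hφ
  have hφa : φ a = sigmaPerm p q := by
    rw [ha, hφ, PresentedGroup.toGroup.of]; simp [hf]
  have hφb : φ b = tauPerm p q := by
    rw [hb, hφ, PresentedGroup.toGroup.of]; simp [hf]
  have part2 : x ≠ a := by
    intro hxa
    -- from x = a deduce a*b = b*a
    have h1 : a * (b * a) = (b * a) * a := by
      have := hxa
      rw [hx] at this
      calc a * (b * a) = (b * a) * ((b * a)⁻¹ * a * (b * a)) := by group
        _ = (b * a) * a := by rw [this]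
    have h2 : a * b = b * a := by
      have := h1
      rw [← mul_assoc] at this
      exact mul_right_cancel this
    have h3 : sigmaPerm p q * tauPerm p q = tauPerm p q * sigmaPerm p q := by
      have := congrArg φ h2
      rw [map_mul, map_mul, hφa, hφb] at this
      exact this
    have h4 := congrFun (congrArg (fun e => (e : Equiv.Perm (ZMod p × ZMod q)).toFun) h3)
      ((0 : ZMod p), (0 : ZMod q))
    simp only [Equiv.toFun_as_coe, Equiv.Perm.coe_mul, Function.comp_apply] at h4
    rw [sigmaPerm_apply, tauPerm_apply, sigmaPerm_apply, tauPerm_apply] at h4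
    norm_num [Prod.ext_iff] at h4
  refine ⟨part1, part2, fun H => part2 (H x a (p : ℤ)
    (by exact_mod_cast (by omega : p ≠ 0))
    (by rw [zpow_natCast, zpow_natCast]; exact part1))⟩
end

section
/- Let p = 2r be even and q ≥ 3 odd with gcd(p,q) = 1, and let G = ⟨a, b | a^p = b^q⟩. Then the commutator [a^r, b] is a generalized torsion element of order two in G, i.e., [a^r, b] ≠ 1 and [a^r, b]^{a^r} · [a^r, b] = 1. -/
/-- Shift of the first coordinate. -/
def shiftX (p q : ℕ) : Equiv.Perm (ZMod p × ZMod q) :=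
  Equiv.prodCongr (Equiv.addRight (1 : ZMod p)) (Equiv.refl _)

/-- Shift of the second coordinate, only on the fiber over `0`. -/
def shiftY (p q : ℕ) : Equiv.Perm (ZMod p × ZMod q) where
  toFun x := (x.1, x.2 + if x.1 = 0 then 1 else 0)
  invFun x := (x.1, x.2 - if x.1 = 0 then 1 else 0)
  left_inv x := by ext <;> simp
  right_inv x := by ext <;> simp

lemma shiftX_pow (p q n : ℕ) (x : ZMod p × ZMod q) :
    (shiftX p q ^ n) x = (x.1 + n, x.2) := by
  induction n generalizing x with
  | zero => simp
  | succ n ih =>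
      rw [pow_succ, Equiv.Perm.mul_apply, ih (shiftX p q x)]
      show (x.1 + 1 + ↑n, x.2) = (x.1 + ↑(n + 1), x.2)
      ext <;> push_cast <;> ring_nf

lemma shiftY_pow (p q n : ℕ) (x : ZMod p × ZMod q) :
    (shiftY p q ^ n) x = (x.1, x.2 + if x.1 = 0 then (n : ZMod q) else 0) := by
  induction n generalizing x with
  | zero => simp
  | succ n ih =>
      rw [pow_succ, Equiv.Perm.mul_apply, ih (shiftY p q x)]
      show (x.1, (x.2 + if x.1 = 0 then (1 : ZMod q) else 0) + if x.1 = 0 then (n : ZMod q) else 0)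
          = (x.1, x.2 + if x.1 = 0 then ((n + 1 : ℕ) : ZMod q) else 0)
      ext
      · rfl
      · simp only
        split_ifs with h
        · push_cast; ring
        · simp

theorem torus_knot_even_type_gen_torsion_order_two (p q r : ℕ)
    (hp : p = 2 * r) (hq : 3 ≤ q) (hqodd : Odd q) (hpq : Nat.Coprime p q) :
    letI G := PresentedGroup (torusRels p q)
    letI a : G := PresentedGroup.of 0
    letI b : G := PresentedGroup.of 1
    gcomm (a ^ r) b ≠ 1 ∧
      (a ^ r)⁻¹ * gcomm (a ^ r) b * (a ^ r) * gcomm (a ^ r) b = 1 := by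
  set a : PresentedGroup (torusRels p q) := PresentedGroup.of 0 with ha
  set b : PresentedGroup (torusRels p q) := PresentedGroup.of 1 with hb
  have hr : 0 < r := by
    by_contra h
    have hp0 : p = 0 := by omega
    rw [hp0, Nat.coprime_zero_left] at hpq
    omega
  have hrel : a ^ p = b ^ q := by
    have h1 : (PresentedGroup.mk (torusRels p q))
        (FreeGroup.of 0 ^ p * (FreeGroup.of 1 ^ q)⁻¹) = 1 := by
      apply (QuotientGroup.eq_one_iff _).mpr
      exact Subgroup.subset_normalClosure rfl
    rw [map_mul, map_inv, map_pow, map_pow, mul_inv_eq_one] at h1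
    exact h1
  constructor
  · -- nontriviality via the permutation representation
    haveI : NeZero p := ⟨by omega⟩
    haveI : NeZero q := ⟨by omega⟩
    haveI : Fact (1 < q) := ⟨by omega⟩
    have hXp : shiftX p q ^ p = 1 := by
      ext x
      · simp [shiftX_pow, ZMod.natCast_self]
      · simp [shiftX_pow]
    have hYq : shiftY p q ^ q = 1 := by
      ext x
      · simp [shiftY_pow]
      · simp [shiftY_pow, ZMod.natCast_self]
    have hrels : ∀ w ∈ torusRels p q,
        FreeGroup.lift (![shiftX p q, shiftY p q]) w = 1 := by
      intro w hw
      simp only [torusRels, Set.mem_singleton_iff] at hw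
      subst hw
      rw [map_mul, map_inv, map_pow, map_pow, FreeGroup.lift_apply_of, FreeGroup.lift_apply_of]
      simp [hXp, hYq]
    set f : PresentedGroup (torusRels p q) →* Equiv.Perm (ZMod p × ZMod q) := PresentedGroup.toGroup hrels with hf
    intro hcomm
    have hfa : f a = shiftX p q := by simp [hf, a, PresentedGroup.toGroup.of]
    have hfb : f b = shiftY p q := by simp [hf, b, PresentedGroup.toGroup.of]
    have himg : gcomm (shiftX p q ^ r) (shiftY p q) = 1 := by
      have := congrArg f hcomm
      rw [map_one] at this
      rw [gcomm, map_mul, map_mul, map_mul, map_inv, map_inv, map_pow, hfa, hfb] at this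
      exact this
    have hcm : shiftX p q ^ r * shiftY p q = shiftY p q * shiftX p q ^ r := by
      rw [gcomm] at himg
      -- from x⁻¹y⁻¹xy = 1 deduce xy = yx
      have : shiftX p q ^ r * shiftY p q
          = shiftY p q * shiftX p q ^ r *
            ((shiftX p q ^ r)⁻¹ * (shiftY p q)⁻¹ * shiftX p q ^ r * shiftY p q) := by
        group
      rw [himg] at this
      rw [mul_one] at this
      exact this
    have hrne : (r : ZMod p) ≠ 0 := by
      rw [Ne, ZMod.natCast_eq_zero_iff]
      intro hdvd
      have := Nat.le_of_dvd hr hdvd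
      omega
    have := congrArg (fun σ : Equiv.Perm (ZMod p × ZMod q) => σ ((0 : ZMod p), (0 : ZMod q))) hcm
    simp only [Equiv.Perm.mul_apply] at this
    have hY00 : shiftY p q ((0 : ZMod p), (0 : ZMod q)) = (0, 1) := by
      simp [shiftY]
    rw [hY00, shiftX_pow, shiftX_pow] at this
    simp only [zero_add] at this
    have hYr : shiftY p q (((r : ZMod p)), (0 : ZMod q)) = ((r : ZMod p), 0) := by
      simp [shiftY, hrne]
    rw [hYr] at this
    have : (1 : ZMod q) = 0 := congrArg Prod.snd this
    exact one_ne_zero this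
  · -- the algebraic identity, using a^p = b^q
    have h2 : a ^ r * a ^ r = b ^ q := by
      rw [← pow_add, show r + r = p by omega, hrel]
    calc (a ^ r)⁻¹ * gcomm (a ^ r) b * (a ^ r) * gcomm (a ^ r) b
        = (a ^ r * a ^ r)⁻¹ * b⁻¹ * (a ^ r * a ^ r) * b := by rw [gcomm]; group
      _ = (b ^ q)⁻¹ * b⁻¹ * (b ^ q) * b := by rw [h2]
      _ = 1 := by group
end

section
/- Let G be a torsion-free group in which every Baumslag–Solitar relation x⁻¹y^m x = y^n with y ≠ 1 implies m = n or m = -n. If G is an R-group but not an R̄-group, then G contains a generalized torsion element of order two. -/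
theorem gen_torsion_order_two_of_R_not_Rbar {G : Type*} [Group G]
    (htf : ∀ g : G, ∀ n : ℕ, 0 < n → g ^ n = 1 → g = 1)
    (hBS : ∀ x y : G, ∀ m n : ℤ, y ≠ 1 → x⁻¹ * y ^ m * x = y ^ n → m = n ∨ m = -n)
    (hR : ∀ x y : G, ∀ n : ℤ, n ≠ 0 → x ^ n = y ^ n → x = y)
    (hnRbar : ¬ ∀ x : G, setNormalizer (isolator x) = setCentralizer (isolator x)) :
    ∃ g x : G, g ≠ 1 ∧ x⁻¹ * g * x = g⁻¹ := by
  -- torsion-free for integer exponents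
  have htfz : ∀ (a : G) (N : ℤ), N ≠ 0 → a ^ N = 1 → a = 1 := by
    intro a N hN h1
    rcases lt_or_gt_of_ne hN with hlt | hgt
    · refine htf a (-N).toNat (by omega) ?_
      have : a ^ (((-N).toNat : ℤ)) = 1 := by
        rw [Int.toNat_of_nonneg (by omega), zpow_neg, h1, inv_one]
      rwa [zpow_natCast] at this
    · refine htf a N.toNat (by omega) ?_
      have : a ^ ((N.toNat : ℤ)) = 1 := by
        rw [Int.toNat_of_nonneg (by omega)]; exact h1
      rwa [zpow_natCast] at this
  push_neg at hnRbar
  obtain ⟨x, hxne⟩ := hnRbar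
  -- centralizer ⊆ normalizer
  have hCN : setCentralizer (isolator x) ⊆ setNormalizer (isolator x) := by
    intro g hg h
    constructor
    · intro hh
      have hc := hg h hh
      have : g⁻¹ * h * g = h := by
        rw [mul_assoc, ← hc, ← mul_assoc, inv_mul_cancel, one_mul]
      rwa [this]
    · intro hh
      have hc := hg _ hh
      have h1 : h * g = g⁻¹ * h * g * g := by
        have : g * (g⁻¹ * h * g) = h * g := by group
        rw [← this, hc]
      have h2 : h = g⁻¹ * h * g := mul_right_cancel h1
      exact h2.symm ▸ hh
  have hnsub : ¬ setNormalizer (isolator x) ⊆ setCentralizer (isolator x) :=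
    fun h2 => hxne (Set.Subset.antisymm h2 hCN)
  obtain ⟨g, hgN, hgC⟩ := Set.not_subset.mp hnsub
  simp only [setCentralizer, Set.mem_setOf_eq] at hgC
  push_neg at hgC
  obtain ⟨h, hhI, hhne⟩ := hgC
  have hh'I : g⁻¹ * h * g ∈ isolator x := (hgN h).mp hhI
  obtain ⟨k, hk, hkmem⟩ := hhI
  obtain ⟨s, hs⟩ := Subgroup.mem_zpowers_iff.mp hkmem
  obtain ⟨k', hk', hk'mem⟩ := hh'I
  obtain ⟨t, ht⟩ := Subgroup.mem_zpowers_iff.mp hk'mem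
  have hne1 : h ≠ 1 := by
    rintro rfl; exact hhne (by group)
  have hs0 : s ≠ 0 := by
    rintro rfl
    simp only [zpow_zero] at hs
    exact hne1 (htf h k hk hs.symm)
  have hxne1 : x ≠ 1 := by
    rintro rfl
    simp only [one_zpow] at hs
    exact hne1 (htf h k hk hs.symm)
  -- conjugation of zpowers
  have hconj : ∀ (a : G) (N : ℤ), (g⁻¹ * a * g) ^ N = g⁻¹ * a ^ N * g := by
    intro a N
    have : g⁻¹ * a * g = g⁻¹ * a * (g⁻¹)⁻¹ := by rw [inv_inv]
    rw [this, conj_zpow, inv_inv]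
  -- key relation: g⁻¹ * x ^ (s*k') * g = x ^ (t*k)
  have hkey : g⁻¹ * x ^ (s * (k' : ℤ)) * g = x ^ (t * (k : ℤ)) := by
    have e1 : x ^ (s * (k' : ℤ)) = h ^ ((k : ℤ) * (k' : ℤ)) := by
      rw [zpow_mul, hs, ← zpow_natCast h k, ← zpow_mul]
    have e2 : (g⁻¹ * h * g) ^ ((k' : ℤ) * (k : ℤ)) = x ^ (t * (k : ℤ)) := by
      rw [zpow_mul, zpow_natCast, zpow_natCast, ← ht, ← zpow_natCast (x ^ t) k, ← zpow_mul]
    rw [e1, ← hconj, mul_comm (k : ℤ) (k' : ℤ), e2]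
  have hsk'0 : s * (k' : ℤ) ≠ 0 :=
    mul_ne_zero hs0 (by exact_mod_cast hk'.ne')
  rcases hBS g x (s * (k' : ℤ)) (t * (k : ℤ)) hxne1 hkey with heq | heq
  · -- m = n case: g commutes with x, hence with h, contradiction
    exfalso
    have hgx : g⁻¹ * x * g = x := by
      refine hR (g⁻¹ * x * g) x (s * (k' : ℤ)) hsk'0 ?_
      rw [hconj, hkey, heq]
    have hgh : g⁻¹ * h * g = h := by
      refine hR (g⁻¹ * h * g) h ((k : ℤ)) (by exact_mod_cast hk.ne') ?_
      rw [hconj, zpow_natCast, ← hs]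
      calc g⁻¹ * x ^ s * g = (g⁻¹ * x * g) ^ s := (hconj x s).symm
      _ = x ^ s := by rw [hgx]
    apply hhne
    nth_rewrite 1 [← hgh]
    group
  · -- m = -n case: generalized torsion element
    refine ⟨x ^ (s * (k' : ℤ)), g, ?_, ?_⟩
    · intro h1
      exact hxne1 (htfz x _ hsk'0 h1)
    · rw [hkey]
      have : t * (k : ℤ) = -(s * (k' : ℤ)) := by omega
      rw [this, zpow_neg]
end

section
/- In the group G = ⟨a, b, c | [b,c] = 1, b^q c^p = a^p⟩ with p = 2r even, the element [a^r, b] satisfies [a^r,b]^{a^r} · [a^r,b] = [a^p, b] = 1, so if [a^r, b] ≠ 1 it is a generalized torsion element of order two. -/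
/-- Relators of the cable space group `⟨a, b, c | [b,c] = 1, b^q c^p = a^p⟩`,
where the generators `a, b, c` are indexed by `0, 1, 2 : Fin 3`. -/
def cableRels (p q : ℕ) : Set (FreeGroup (Fin 3)) :=
  { (FreeGroup.of 1)⁻¹ * (FreeGroup.of 2)⁻¹ * FreeGroup.of 1 * FreeGroup.of 2,
    FreeGroup.of 1 ^ q * FreeGroup.of 2 ^ p * (FreeGroup.of 0 ^ p)⁻¹ }

theorem cable_space_gen_torsion_order_two (p q r : ℕ) (hp : p = 2 * r) :
    letI G := PresentedGroup (cableRels p q)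
    letI a : G := PresentedGroup.of 0
    letI b : G := PresentedGroup.of 1
    (a ^ r)⁻¹ * gcomm (a ^ r) b * (a ^ r) * gcomm (a ^ r) b = gcomm (a ^ p) b ∧
    gcomm (a ^ p) b = 1 ∧
    (gcomm (a ^ r) b ≠ 1 →
      ∃ x : G, x⁻¹ * gcomm (a ^ r) b * x = (gcomm (a ^ r) b)⁻¹) := by
  set a : PresentedGroup (cableRels p q) := PresentedGroup.of 0 with ha
  set b : PresentedGroup (cableRels p q) := PresentedGroup.of 1 with hb
  set c : PresentedGroup (cableRels p q) := PresentedGroup.of 2 with hc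
  have hrel : ∀ w ∈ cableRels p q, PresentedGroup.mk (cableRels p q) w = 1 := by
    intro w hw
    change (QuotientGroup.mk w : PresentedGroup (cableRels p q)) = 1
    rw [QuotientGroup.eq_one_iff]
    exact Subgroup.subset_normalClosure hw
  have h1 : b⁻¹ * c⁻¹ * b * c = 1 := by
    have := hrel _ (Set.mem_insert _ _)
    simpa [ha, hb, hc, PresentedGroup.of] using this
  have h2 : b ^ q * c ^ p * (a ^ p)⁻¹ = 1 := by
    have := hrel _ (Set.mem_insert_of_mem _ rfl)
    simpa [ha, hb, hc, PresentedGroup.of] using this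
  have hbc : Commute b c := by
    show b * c = c * b
    calc b * c = c * b * (b⁻¹ * c⁻¹ * b * c) := by group
    _ = c * b := by rw [h1]; group
  have hap : a ^ p = b ^ q * c ^ p := by
    have := h2
    rw [mul_inv_eq_one] at this
    exact this.symm
  have hcomm : Commute (a ^ p) b := by
    rw [hap]
    exact ((Commute.refl b).pow_left q).mul_left ((hbc.symm.pow_left p))
  have h2' : gcomm (a ^ p) b = 1 := by
    unfold gcomm
    rw [show (a ^ p)⁻¹ * b⁻¹ * a ^ p * b = (b * a ^ p)⁻¹ * (a ^ p * b) by group, hcomm.eq]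
    group
  have h1' : (a ^ r)⁻¹ * gcomm (a ^ r) b * (a ^ r) * gcomm (a ^ r) b = gcomm (a ^ p) b := by
    unfold gcomm
    subst hp
    group
  refine ⟨h1', h2', fun _ => ⟨a ^ r, ?_⟩⟩
  have := h1'.trans h2'
  rw [mul_eq_one_iff_eq_inv] at this
  exact this
end
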